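/- arXiv:1304.6887 — 2 statements merged into one kernel-verified Lean document; each statement's English description precedes it below -/
import Mathlib

section
/- Let k > 1 be an odd integer and let d = k² + 4. Then the positive integer solutions of the Pell equation x² − d·y² = −1 are exactly the pairs (x, y) = (V_{6n−3}(k,1)/2, U_{6n−3}(k,1)/2) for n ≥ 1. -/
/-- Generalized Fibonacci sequence: `U 0 = 0`, `U 1 = 1`, `U (n+2) = k * U (n+1) + s * U n`. -/
def genFib (k s : ℤ) : ℕ → ℤ
  | 0 => 0
  | 1 => 1
  | n + 2 => k * genFib k s (n + 1) + s * genFib k s n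

/-- Generalized Lucas sequence: `V 0 = 2`, `V 1 = k`, `V (n+2) = k * V (n+1) + s * V n`. -/
def genLucas (k s : ℤ) : ℕ → ℤ
  | 0 => 2
  | 1 => k
  | n + 2 => k * genLucas k s (n + 1) + s * genLucas k s n

lemma genFib_add_two (k : ℤ) (n : ℕ) :
    genFib k 1 (n+2) = k * genFib k 1 (n+1) + genFib k 1 n := by simp [genFib]

lemma genLucas_add_two (k : ℤ) (n : ℕ) :
    genLucas k 1 (n+2) = k * genLucas k 1 (n+1) + genLucas k 1 n := by simp [genLucas]

lemma lucas_eq (k : ℤ) : ∀ m, genLucas k 1 m = 2 * genFib k 1 (m+1) - k * genFib k 1 m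
  | 0 => by simp [genFib, genLucas]
  | 1 => by simp [genFib, genLucas]; ring
  | (m+2) => by
      rw [genLucas_add_two, lucas_eq k m, lucas_eq k (m+1),
        genFib_add_two k (m+1), genFib_add_two k m]
      ring

lemma cassini (k : ℤ) : ∀ m, genFib k 1 (m+1)^2 - k * genFib k 1 (m+1) * genFib k 1 m
    - genFib k 1 m ^ 2 = (-1)^m
  | 0 => by simp [genFib]
  | (m+1) => by
      have h := cassini k m
      rw [genFib_add_two]
      linear_combination (-1 : ℤ) * h

lemma normId (k : ℤ) (m : ℕ) :
    genLucas k 1 m ^ 2 - (k^2+4) * genFib k 1 m ^ 2 = 4 * (-1)^m := by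
  rw [lucas_eq]; linear_combination 4 * cassini k m

lemma addL (k : ℤ) (m : ℕ) : 2 * genLucas k 1 (m+2)
    = (k^2+2) * genLucas k 1 m + k * (k^2+4) * genFib k 1 m := by
  rw [lucas_eq, lucas_eq, show m+2+1 = m+1+2 from rfl, genFib_add_two, genFib_add_two]
  ring

lemma addU (k : ℤ) (m : ℕ) : 2 * genFib k 1 (m+2)
    = k * genLucas k 1 m + (k^2+2) * genFib k 1 m := by
  rw [lucas_eq, genFib_add_two]
  ring

lemma trip (k : ℤ) (hk : Odd k) : ∀ j : ℕ, Even (genFib k 1 (3*j)) ∧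
    Odd (genFib k 1 (3*j+1)) ∧ Odd (genFib k 1 (3*j+2))
  | 0 => by
      refine ⟨by simp [genFib], by simp [genFib], ?_⟩
      have : genFib k 1 2 = k := by simp [genFib]
      rw [this]; exact hk
  | (j+1) => by
      obtain ⟨h0, h1, h2⟩ := trip k hk j
      have i0 : 3*(j+1) = 3*j+1+2 := by omega
      have i1 : 3*(j+1)+1 = 3*j+2+2 := by omega
      have A : Even (genFib k 1 (3*(j+1))) := by
        rw [i0, genFib_add_two]; exact (hk.mul h2).add_odd h1
      have B : Odd (genFib k 1 (3*(j+1)+1)) := by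
        rw [i1, genFib_add_two, ← i0]; exact ((A.mul_left k)).add_odd h2
      have C : Odd (genFib k 1 (3*(j+1)+2)) := by
        rw [show 3*(j+1)+2 = (3*j+3)+2 from by omega, genFib_add_two,
          show 3*j+3+1 = 3*(j+1)+1 from by omega, show 3*j+3 = 3*(j+1) from by omega]
        exact (hk.mul B).add_even A
      exact ⟨A, B, C⟩

lemma fib_even_iff (k : ℤ) (hk : Odd k) (m : ℕ) : Even (genFib k 1 m) ↔ 3 ∣ m := by
  constructor
  · intro h
    by_contra hd
    have hm : m = 3*(m/3) + m%3 := by omega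
    have h3 : m % 3 = 1 ∨ m % 3 = 2 := by omega
    rcases h3 with h3 | h3
    · have ho := (trip k hk (m/3)).2.1
      rw [hm, h3] at h
      exact (Int.not_odd_iff_even.mpr h) ho
    · have ho := (trip k hk (m/3)).2.2
      rw [hm, h3] at h
      exact (Int.not_odd_iff_even.mpr h) ho
  · rintro ⟨j, rfl⟩
    exact (trip k hk j).1

lemma descent (k : ℤ) (hk : 1 < k) :
    ∀ N : ℕ, ∀ X Y : ℤ, Y.natAbs = N → 0 < X → 0 < Y →
      X^2 - (k^2+4)*Y^2 = -4 →
      ∃ m : ℕ, Odd m ∧ X = genLucas k 1 m ∧ Y = genFib k 1 m := by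
  intro N
  induction N using Nat.strong_induction_on with
  | _ N ih =>
    intro X Y hN hX hY heq
    rcases eq_or_lt_of_le (show (1:ℤ) ≤ Y by omega) with h1 | hY2
    · -- Y = 1
      have hY1 : Y = 1 := h1.symm
      subst hY1
      have hXk : X = k := by
        have h2 : (X - k) * (X + k) = 0 := by linear_combination heq
        rcases mul_eq_zero.mp h2 with h | h
        · linarith
        · linarith
      refine ⟨1, odd_one, ?_, ?_⟩
      · rw [hXk]; simp [genLucas]
      · simp [genFib]
    · -- Y ≥ 2
      have hY2' : 2 ≤ Y := hY2
      obtain ⟨r, rfl⟩ : ∃ r, X = k*Y + r := ⟨X - k*Y, by ring⟩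
      have hr0 : 0 < r := by
        by_contra hle
        push_neg at hle
        have hkY : (0:ℤ) < k * Y := mul_pos (by linarith) (by linarith)
        have h1 : 0 ≤ (-r) * ((k*Y + r) + k*Y) := by nlinarith
        nlinarith [h1, heq]
      have heq2 : 2*k*r*Y + r^2 = 4*Y^2 - 4 := by linear_combination heq
      have hre : Even r := by
        have h2 : Even (r^2) := ⟨2*Y^2 - 2 - k*r*Y, by linarith⟩
        exact (Int.even_pow.mp h2).1
      obtain ⟨s, rfl⟩ := hre
      have hs1 : 1 ≤ s := by omega
      have heq3 : s^2 + k*s*Y - Y^2 = -1 := by nlinarith [heq2]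
      have hsk : k*s < Y := by nlinarith [mul_pos (show (0:ℤ) < Y from by linarith) hY]
      have hX'pos : k*Y < (k^2+2)*s := by
        have h1 : k*Y*Y < ((k^2+2)*s)*Y := by nlinarith [hsk, hs1, hk, hY2']
        exact lt_of_mul_lt_mul_right h1 (by linarith)
      have heq' : ((k^2+2)*s - k*Y)^2 - (k^2+4)*(Y - k*s)^2 = -4 := by
        linear_combination 4 * heq3
      have hY'pos : 0 < Y - k*s := by linarith
      have hks : 0 < k*s := mul_pos (by linarith) (by linarith)
      obtain ⟨m, hmo, hXm, hYm⟩ := ih (Y - k*s).natAbs (by omega) _ _ rfl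
        (by linarith) hY'pos heq'
      refine ⟨m+2, hmo.add_even (by decide), ?_, ?_⟩
      · have h := addL k m
        rw [← hXm, ← hYm] at h
        have h2 : 2 * (k*Y + (s+s)) = 2 * genLucas k 1 (m+2) := by rw [h]; ring
        linarith
      · have h := addU k m
        rw [← hXm, ← hYm] at h
        have h2 : 2 * Y = 2 * genFib k 1 (m+2) := by rw [h]; ring
        linarith

theorem solutions_neg_one_k_sq_add_four_odd (k : ℤ) (hk : 1 < k) (hodd : Odd k)
    (x y : ℤ) (hx : 0 < x) (hy : 0 < y) :
    x ^ 2 - (k ^ 2 + 4) * y ^ 2 = -1 ↔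
      ∃ n : ℕ, 1 ≤ n ∧ 2 * x = genLucas k 1 (6 * n - 3) ∧ 2 * y = genFib k 1 (6 * n - 3) := by
  constructor
  · intro h
    have heq4 : (2*x)^2 - (k^2+4)*(2*y)^2 = -4 := by linear_combination 4 * h
    obtain ⟨m, hmo, hXm, hYm⟩ := descent k hk (2*y).natAbs (2*x) (2*y) rfl
      (by linarith) (by linarith) heq4
    -- U m is even
    have hkU : Even (k * genFib k 1 m) := by
      refine ⟨genFib k 1 (m+1) - x, ?_⟩
      have h2 := lucas_eq k m
      rw [← hXm] at h2
      linarith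
    have hU : Even (genFib k 1 m) := by
      rcases Int.even_mul.mp hkU with h2 | h2
      · exact absurd h2 (Int.not_even_iff_odd.mpr hodd)
      · exact h2
    have h3 : 3 ∣ m := (fib_even_iff k hodd m).mp hU
    have h2 : m % 2 = 1 := Nat.odd_iff.mp hmo
    obtain ⟨n, hn1, hnm⟩ : ∃ n : ℕ, 1 ≤ n ∧ 6*n - 3 = m :=
      ⟨(m+3)/6, by omega, by omega⟩
    exact ⟨n, hn1, by rw [hnm]; exact hXm, by rw [hnm]; exact hYm⟩
  · rintro ⟨n, hn, hX, hY⟩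
    have hmo : Odd (6*n - 3) := Nat.odd_iff.mpr (by omega)
    have h := normId k (6*n - 3)
    rw [hmo.neg_one_pow, ← hX, ← hY] at h
    have h4 : 4*(x^2 - (k^2+4)*y^2) = -4 := by linear_combination h
    linarith
end

section
/- Let k > 3 and let d = k² − 4. If k is even, then the positive integer solutions of the Pell equation x² − d·y² = 1 are exactly the pairs (x, y) = (V_{2n}(k,−1)/2, U_{2n}(k,−1)/2) for n ≥ 1. If k is odd, then the positive integer solutions of x² − d·y² = 1 are exactly the pairs (x, y) = (V_{3n}(k,−1)/2, U_{3n}(k,−1)/2) for n ≥ 1. -/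
lemma genFib_rec (k : ℤ) (n : ℕ) :
    genFib k (-1) (n + 2) = k * genFib k (-1) (n + 1) - genFib k (-1) n := by
  show k * genFib k (-1) (n + 1) + (-1) * genFib k (-1) n = _
  ring

lemma genLucas_rec (k : ℤ) (n : ℕ) :
    genLucas k (-1) (n + 2) = k * genLucas k (-1) (n + 1) - genLucas k (-1) n := by
  show k * genLucas k (-1) (n + 1) + (-1) * genLucas k (-1) n = _
  ring

/-- Shift identities. -/
lemma shift (k : ℤ) (n : ℕ) :
    2 * genLucas k (-1) (n + 1) = k * genLucas k (-1) n + (k ^ 2 - 4) * genFib k (-1) n ∧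
    2 * genFib k (-1) (n + 1) = genLucas k (-1) n + k * genFib k (-1) n := by
  induction n with
  | zero => constructor <;> (show (2:ℤ) * _ = _; simp [genFib, genLucas]) <;> ring
  | succ n ih =>
    obtain ⟨h1, h2⟩ := ih
    constructor
    · have h : 2 * (2 * genLucas k (-1) (n + 2)) =
          2 * (k * genLucas k (-1) (n + 1) + (k ^ 2 - 4) * genFib k (-1) (n + 1)) := by
        rw [genLucas_rec]
        linear_combination k * h1 - (k ^ 2 - 4) * h2
      linarith
    · have h : 2 * (2 * genFib k (-1) (n + 2)) =
          2 * (genLucas k (-1) (n + 1) + k * genFib k (-1) (n + 1)) := by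
        rw [genFib_rec]
        linear_combination k * h2 - h1
      linarith

/-- Norm identity: `V n ^ 2 - (k^2-4) * U n ^ 2 = 4`. -/
lemma norm4 (k : ℤ) (n : ℕ) :
    genLucas k (-1) n ^ 2 - (k ^ 2 - 4) * genFib k (-1) n ^ 2 = 4 := by
  induction n with
  | zero => simp [genFib, genLucas]
  | succ n ih =>
    obtain ⟨h1, h2⟩ := shift k n
    have h : 4 * (genLucas k (-1) (n + 1) ^ 2 - (k ^ 2 - 4) * genFib k (-1) (n + 1) ^ 2) =
        4 * 4 := by
      linear_combination (2 * genLucas k (-1) (n + 1) + k * genLucas k (-1) n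
          + (k ^ 2 - 4) * genFib k (-1) n) * h1
        - (k ^ 2 - 4) * (2 * genFib k (-1) (n + 1) + genLucas k (-1) n
          + k * genFib k (-1) n) * h2 + 4 * ih
    linarith

/-- Parity fact needed for the descent. -/
lemma parity_step (k X Y : ℤ) (h : X ^ 2 - (k ^ 2 - 4) * Y ^ 2 = 4) : 2 ∣ k * Y - X := by
  have key : ∀ a b c : ZMod 2, a ^ 2 - (b ^ 2 - 4) * c ^ 2 = 4 → b * c - a = 0 := by decide
  have hc : ((X : ZMod 2)) ^ 2 - (((k : ZMod 2)) ^ 2 - 4) * ((Y : ZMod 2)) ^ 2 = 4 := by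
    have := congrArg (fun z : ℤ => (z : ZMod 2)) h
    push_cast at this
    exact this
  have := key _ _ _ hc
  have h0 : ((k * Y - X : ℤ) : ZMod 2) = 0 := by push_cast; exact this
  exact (ZMod.intCast_zmod_eq_zero_iff_dvd _ 2).mp h0

/-- Classification of positive solutions of `X^2 - (k^2-4) Y^2 = 4`. -/
lemma classify (k : ℤ) (hk : 3 < k) :
    ∀ N : ℕ, ∀ X Y : ℤ, Y.toNat ≤ N → 0 < X → 0 ≤ Y →
      X ^ 2 - (k ^ 2 - 4) * Y ^ 2 = 4 →
      ∃ n : ℕ, X = genLucas k (-1) n ∧ Y = genFib k (-1) n := by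
  intro N
  induction N with
  | zero =>
    intro X Y hYN hX hY heq
    have hY0 : Y = 0 := by omega
    subst hY0
    have hX2 : X = 2 := by nlinarith
    exact ⟨0, by simp [genLucas, genFib, hX2]⟩
  | succ N ih =>
    intro X Y hYN hX hY heq
    rcases eq_or_lt_of_le hY with hY0 | hY1
    · subst hY0
      have hX2 : X = 2 := by nlinarith
      exact ⟨0, by simp [genLucas, genFib, hX2]⟩
    · -- Y ≥ 1 ; descent
      have hY1' : 1 ≤ Y := hY1
      obtain ⟨c, hc⟩ := parity_step k X Y heq
      -- k*Y - X = 2*c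
      have hXc : X = k * Y - 2 * c := by linarith
      -- reduced norm equation
      have hred : Y ^ 2 - k * Y * c + c ^ 2 = 1 := by nlinarith [heq, hXc]
      -- bounds
      have hXle : X ≤ k * Y := by
        by_contra h
        push_neg at h
        have h1 : 0 < k * Y := mul_pos (by linarith) hY1'
        have h2 : (k * Y) ^ 2 < X ^ 2 := by
          exact pow_lt_pow_left₀ h h1.le two_ne_zero
        nlinarith [heq, h2, hY1', sq_nonneg (Y - 1)]
      have hc0 : 0 ≤ c := by linarith
      have hXgt : (k - 2) * Y < X := by nlinarith
      have hcY : c < Y := by linarith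
      -- new solution
      have hX'pos : 0 < 2 * Y - k * c := by nlinarith [hred, hc0, hcY, hY1']
      have heq' : (2 * Y - k * c) ^ 2 - (k ^ 2 - 4) * c ^ 2 = 4 := by nlinarith [hred]
      have hcN : c.toNat ≤ N := by omega
      obtain ⟨m, hVm, hUm⟩ := ih (2 * Y - k * c) c hcN hX'pos hc0 heq'
      obtain ⟨s1, s2⟩ := shift k m
      refine ⟨m + 1, ?_, ?_⟩
      · have : 2 * X = 2 * genLucas k (-1) (m + 1) := by
          rw [s1, ← hVm, ← hUm]; linarith [hXc]
        linarith
      · have : 2 * Y = 2 * genFib k (-1) (m + 1) := by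
          rw [s2, ← hVm, ← hUm]; ring
        linarith

/-- mod 2 pattern of U for even k. -/
lemma fib_parity_even (k : ℤ) (hke : Even k) :
    ∀ j : ℕ, Even (genFib k (-1) (2 * j)) ∧ Odd (genFib k (-1) (2 * j + 1)) := by
  intro j
  induction j with
  | zero => simp [genFib]
  | succ j ih =>
    obtain ⟨h0, h1⟩ := ih
    have e2 : Even (genFib k (-1) (2 * j + 2)) := by
      rw [genFib_rec]
      exact ((hke.mul_right _).sub h0)
    have e3 : Odd (genFib k (-1) (2 * j + 3)) := by
      have : genFib k (-1) (2 * j + 3) = k * genFib k (-1) (2 * j + 2) - genFib k (-1) (2 * j + 1) :=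
        genFib_rec k (2 * j + 1)
      rw [this]
      exact (hke.mul_right _).sub_odd h1
    constructor
    · have : 2 * (j + 1) = 2 * j + 2 := by ring
      rw [this]; exact e2
    · have : 2 * (j + 1) + 1 = 2 * j + 3 := by ring
      rw [this]; exact e3

/-- mod 2 pattern of U for odd k. -/
lemma fib_parity_odd (k : ℤ) (hko : Odd k) :
    ∀ j : ℕ, Even (genFib k (-1) (3 * j)) ∧ Odd (genFib k (-1) (3 * j + 1)) ∧
      Odd (genFib k (-1) (3 * j + 2)) := by
  intro j
  induction j with
  | zero =>
    refine ⟨by simp [genFib], by simp [genFib], ?_⟩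
    have : genFib k (-1) 2 = k * 1 + (-1) * 0 := rfl
    rw [this]; simpa using hko
  | succ j ih =>
    obtain ⟨h0, h1, h2⟩ := ih
    have e3 : Even (genFib k (-1) (3 * j + 3)) := by
      have : genFib k (-1) (3 * j + 3) = k * genFib k (-1) (3 * j + 2) - genFib k (-1) (3 * j + 1) :=
        genFib_rec k (3 * j + 1)
      rw [this]
      exact (hko.mul h2).sub_odd h1
    have e4 : Odd (genFib k (-1) (3 * j + 4)) := by
      have : genFib k (-1) (3 * j + 4) = k * genFib k (-1) (3 * j + 3) - genFib k (-1) (3 * j + 2) :=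
        genFib_rec k (3 * j + 2)
      rw [this]
      exact (e3.mul_left k).sub_odd h2
    have e5 : Odd (genFib k (-1) (3 * j + 5)) := by
      have : genFib k (-1) (3 * j + 5) = k * genFib k (-1) (3 * j + 4) - genFib k (-1) (3 * j + 3) :=
        genFib_rec k (3 * j + 3)
      rw [this]
      exact (hko.mul e4).sub_even e3
    refine ⟨?_, ?_, ?_⟩
    · have : 3 * (j + 1) = 3 * j + 3 := by ring
      rw [this]; exact e3
    · have : 3 * (j + 1) + 1 = 3 * j + 4 := by ring
      rw [this]; exact e4
    · have : 3 * (j + 1) + 2 = 3 * j + 5 := by ring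
      rw [this]; exact e5

theorem solutions_one_k_sq_sub_four (k : ℤ) (hk : 3 < k) :
    (Even k → ∀ x y : ℤ, 0 < x → 0 < y →
      (x ^ 2 - (k ^ 2 - 4) * y ^ 2 = 1 ↔
        ∃ n : ℕ, 1 ≤ n ∧ 2 * x = genLucas k (-1) (2 * n) ∧ 2 * y = genFib k (-1) (2 * n))) ∧
    (Odd k → ∀ x y : ℤ, 0 < x → 0 < y →
      (x ^ 2 - (k ^ 2 - 4) * y ^ 2 = 1 ↔
        ∃ n : ℕ, 1 ≤ n ∧ 2 * x = genLucas k (-1) (3 * n) ∧ 2 * y = genFib k (-1) (3 * n))) := by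
  constructor
  · intro hke x y hx hy
    constructor
    · intro heq
      have h4 : (2 * x) ^ 2 - (k ^ 2 - 4) * (2 * y) ^ 2 = 4 := by linear_combination 4 * heq
      obtain ⟨m, hV, hU⟩ := classify k hk (2 * y).toNat (2 * x) (2 * y) le_rfl
        (by linarith) (by linarith) h4
      -- U m even → m even
      have hUeven : Even (genFib k (-1) m) := ⟨y, by linarith⟩
      have hm : Even m := by
        rcases Nat.even_or_odd m with h | h
        · exact h
        · exfalso
          obtain ⟨j, hj⟩ := h
          have := (fib_parity_even k hke j).2
          rw [← hj] at this
          exact (Int.not_odd_iff_even.mpr hUeven) this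
      obtain ⟨n, hn⟩ := hm
      have hmn : m = 2 * n := by omega
      have hn1 : 1 ≤ n := by
        by_contra h
        have hn0 : n = 0 := by omega
        rw [hmn, hn0] at hU
        simp [genFib] at hU
        omega
      exact ⟨n, hn1, by rw [← hmn]; exact hV, by rw [← hmn]; exact hU⟩
    · rintro ⟨n, _, hV, hU⟩
      have h := norm4 k (2 * n)
      rw [← hV, ← hU] at h
      nlinarith [h]
  · intro hko x y hx hy
    constructor
    · intro heq
      have h4 : (2 * x) ^ 2 - (k ^ 2 - 4) * (2 * y) ^ 2 = 4 := by linear_combination 4 * heq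
      obtain ⟨m, hV, hU⟩ := classify k hk (2 * y).toNat (2 * x) (2 * y) le_rfl
        (by linarith) (by linarith) h4
      have hUeven : Even (genFib k (-1) m) := ⟨y, by linarith⟩
      have hm3 : m % 3 = 0 := by
        by_contra h
        obtain ⟨h0, h1, h2⟩ := fib_parity_odd k hko (m / 3)
        have hr : m % 3 = 1 ∨ m % 3 = 2 := by omega
        rcases hr with hr | hr
        · have hm : m = 3 * (m / 3) + 1 := by omega
          rw [← hm] at h1
          exact (Int.not_odd_iff_even.mpr hUeven) h1
        · have hm : m = 3 * (m / 3) + 2 := by omega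
          rw [← hm] at h2
          exact (Int.not_odd_iff_even.mpr hUeven) h2
      obtain ⟨n, hn⟩ : ∃ n, m = 3 * n := ⟨m / 3, by omega⟩
      have hn1 : 1 ≤ n := by
        by_contra h
        have hn0 : n = 0 := by omega
        rw [hn, hn0] at hU
        simp [genFib] at hU
        omega
      exact ⟨n, hn1, by rw [← hn]; exact hV, by rw [← hn]; exact hU⟩
    · rintro ⟨n, _, hV, hU⟩
      have h := norm4 k (3 * n)
      rw [← hV, ← hU] at h
      nlinarith [h]
end
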